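/- arXiv:1512.09201 — 7 statements merged into one kernel-verified Lean document; each statement's English description precedes it below -/
import Mathlib

section
/- Let μ > 0, ν > -1, let n, m be positive integers, and let α > m+n be real. For every (z,w) ∈ D_{n,m}(μ), ∑_{p∈ℕ^n, q∈ℕ^m} ( (μ((ν+1)α+|q|))^{|p|} · χ(α,|q|) / (∏_{i=1}^n Γ(p_i+1) · ∏_{j=1}^m Γ(q_j+1)) ) · |z|^{2p}·|w|^{2q} = (α-m-n)_{m+n} · exp(μ(ν+1)α‖z‖²) · ∑_{q∈ℕ^m} ψ(α,|q|) · Γ(|q|+α)/(Γ(α)·∏_{i=1}^m Γ(q_i+1)) · |w̃|^{2q}, both series being convergent. (The left-hand side is the diagonal of the Bergman kernel K_α(z,w,z̄,w̄) of the weighted Hilbert space of holomorphic functions on D_{n,m}(μ) square-integrable against exp(-αΦ) times the volume form of g(μ;ν).) -/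
/-!
Write `t_i = ‖z_i‖²`, `s_j = ‖w_j‖²` and `T = ‖z‖²`. For fixed `q` the sum over `p` is an
exponential series with value `e^{μ((ν+1)α+|q|)T} χ(α,|q|) s^q/q!`, so the left-hand side equals
`e^{μ(ν+1)αT} ∑_q χ(α,|q|) (e^{μT}s)^q/q!`; since `Γ(α) = (α-m-n)_{m+n} Γ(α-m-n)`, this is the
right-hand side term by term.

For absolute convergence, the denominator of `χ(α,k)` is asymptotic to `Γ(α-m-n)/Γ(α-n+k)`, so
`χ(α,k) = O(k^n Γ(α-n+k))` and `∑_k |χ(α,k)| S^k/k!` converges for `|S| < 1` by the ratio test.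
Grouping the multi-indices `q` by `|q|`, the multinomial theorem reduces the `q`-series to this
one with `S = e^{μ‖z‖²}‖w‖² < 1`.
-/

open Finset

/-- Pochhammer symbol `(a)_k = a(a+1)⋯(a+k-1)`. -/
noncomputable def poch (a : ℝ) (k : ℕ) : ℝ := ∏ i ∈ Finset.range k, (a + i)

/-- `χ(α,k)` from the paper. -/
noncomputable def chi (ν α : ℝ) (n m k : ℕ) : ℝ :=
  ((ν + 1) * α + k) ^ n /
    ∑ d ∈ Finset.range (n + 1),
      (n.choose d : ℝ) * ν ^ (n - d) * Real.Gamma (α - m - d) / Real.Gamma (α - d + k)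

/-- `ψ(α,k) = Γ(α-m-n)·χ(α,k)/Γ(α+k)`. -/
noncomputable def psi (ν α : ℝ) (n m k : ℕ) : ℝ :=
  Real.Gamma (α - m - n) * chi ν α n m k / Real.Gamma (α + k)

open Filter Topology Asymptotics Nat

theorem Gamma_add_nat_eq_Gamma_mul_poch {a : ℝ} (ha : 0 < a) (N : ℕ) :
    Real.Gamma (a + N) = Real.Gamma a * poch a N := by
  induction N with
  | zero => simp [poch]
  | succ N ih =>
    rw [poch, prod_range_succ, ← poch, ← mul_assoc, ← ih, Nat.cast_succ, ← add_assoc,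
      Real.Gamma_add_one (by positivity)]
    ring

theorem tendsto_Gamma_div_Gamma_add {j : ℝ} (hj : 1 ≤ j) :
    Tendsto (fun y => Real.Gamma y / Real.Gamma (y + j)) atTop (𝓝 0) := by
  have hbound : ∀ᶠ y in atTop, Real.Gamma y / Real.Gamma (y + j) ≤ y⁻¹ := by
    filter_upwards [eventually_ge_atTop 2] with y hy
    have hΓ : 0 < Real.Gamma y := Real.Gamma_pos_of_pos (by linarith)
    have hmono : Real.Gamma (y + 1) ≤ Real.Gamma (y + j) :=
      Real.Gamma_strictMonoOn_Ici.monotoneOn (Set.mem_Ici.mpr (by linarith))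
        (Set.mem_Ici.mpr (by linarith)) (by linarith)
    rw [Real.Gamma_add_one (by positivity)] at hmono
    rw [div_le_iff₀ (by positivity)]
    calc Real.Gamma y = y⁻¹ * (y * Real.Gamma y) := by field_simp
      _ ≤ y⁻¹ * Real.Gamma (y + j) := by gcongr
  have hnonneg : ∀ᶠ y in atTop, 0 ≤ Real.Gamma y / Real.Gamma (y + j) := by
    filter_upwards [eventually_gt_atTop 0] with y hy
    exact div_nonneg (Real.Gamma_pos_of_pos hy).le (Real.Gamma_pos_of_pos (by linarith)).le
  exact tendsto_of_tendsto_of_tendsto_of_le_of_le' tendsto_const_nhds tendsto_inv_atTop_zero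
    hnonneg hbound

theorem tendsto_natCast_add_atTop (x : ℝ) : Tendsto (fun k : ℕ => x + k) atTop atTop :=
  tendsto_atTop_add_const_left _ _ tendsto_natCast_atTop_atTop

theorem tendsto_chi_denominator_mul_Gamma (ν α : ℝ) (n m : ℕ) :
    Tendsto (fun k : ℕ => (∑ d ∈ range (n + 1),
      (n.choose d : ℝ) * ν ^ (n - d) * Real.Gamma (α - m - d) / Real.Gamma (α - d + k)) *
        Real.Gamma (α - n + k)) atTop (𝓝 (Real.Gamma (α - m - n))) := by
  have hterm : ∀ d ∈ range (n + 1), Tendsto (fun k : ℕ =>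
      (n.choose d : ℝ) * ν ^ (n - d) * Real.Gamma (α - m - d) / Real.Gamma (α - d + k) *
        Real.Gamma (α - n + k)) atTop
      (𝓝 (if d = n then Real.Gamma (α - m - n) else 0)) := by
    intro d hd
    split_ifs with hdn
    · subst hdn
      refine tendsto_const_nhds.congr' ?_
      filter_upwards [(tendsto_natCast_add_atTop (α - d)).eventually_gt_atTop 0] with k hk
      have : Real.Gamma (α - d + k) ≠ 0 := (Real.Gamma_pos_of_pos hk).ne'
      simp [field]
    · have hlt : d < n := lt_of_le_of_ne (Nat.lt_succ_iff.mp (mem_range.mp hd)) hdn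
      have hj : (1 : ℝ) ≤ ((n - d : ℕ) : ℝ) := by exact_mod_cast Nat.sub_pos_of_lt hlt
      have hshift : ∀ k : ℕ, α - d + k = (α - n + k) + ((n - d : ℕ) : ℝ) := by
        intro k; rw [Nat.cast_sub hlt.le]; ring
      have := ((tendsto_Gamma_div_Gamma_add hj).comp
        (tendsto_natCast_add_atTop (α - n))).const_mul
          ((n.choose d : ℝ) * ν ^ (n - d) * Real.Gamma (α - m - d))
      rw [mul_zero] at this
      refine this.congr fun k => ?_
      simp only [Function.comp_apply, hshift]
      ring
  have := tendsto_finsetSum _ hterm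
  rw [sum_ite_eq', if_pos (mem_range.mpr n.lt_succ_self)] at this
  simpa only [sum_mul] using this

theorem isBigO_chi {ν α : ℝ} {n m : ℕ} (hΓ : Real.Gamma (α - m - n) ≠ 0) :
    (fun k : ℕ => chi ν α n m k) =O[atTop]
      fun k : ℕ => ((ν + 1) * α + k) ^ n * Real.Gamma (α - n + k) := by
  have hden := ((tendsto_chi_denominator_mul_Gamma ν α n m).inv₀ hΓ).isBigO_one ℝ
  have h := (isBigO_refl (fun k : ℕ => ((ν + 1) * α + k) ^ n * Real.Gamma (α - n + k)) atTop).mul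
    hden
  simp only [mul_one] at h
  refine h.congr' ?_ EventuallyEq.rfl
  filter_upwards [(tendsto_natCast_add_atTop (α - n)).eventually_gt_atTop 0] with k hk
  have : Real.Gamma (α - n + k) ≠ 0 := (Real.Gamma_pos_of_pos hk).ne'
  simp only [chi, mul_inv, div_eq_mul_inv]
  field_simp

theorem summable_pow_mul_Gamma_mul_pow_div_factorial (β x r : ℝ) (n : ℕ) (hr : |r| < 1) :
    Summable fun k : ℕ => (β + k) ^ n * Real.Gamma (x + k) * (r ^ k / k !) := by
  rcases eq_or_ne r 0 with rfl | hr0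
  · refine summable_of_ne_finset_zero (s := {0}) fun k hk => ?_
    simp [zero_pow (show k ≠ 0 by simpa using hk)]
  have hpos : ∀ᶠ k : ℕ in atTop, 0 < β + k ∧ 0 < x + k :=
    ((tendsto_natCast_add_atTop β).eventually_gt_atTop 0).and
      ((tendsto_natCast_add_atTop x).eventually_gt_atTop 0)
  have hratio : ∀ᶠ k : ℕ in atTop,
      (β + (k + 1 : ℕ)) ^ n * Real.Gamma (x + (k + 1 : ℕ)) * (r ^ (k + 1) / (k + 1)!) =
        (β + k) ^ n * Real.Gamma (x + k) * (r ^ k / k !) *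
          (((β + 1 + k) / (β + k)) ^ n * ((x + k) / (1 + k)) * r) := by
    filter_upwards [hpos] with k ⟨hβk, hxk⟩
    have hΓ : Real.Gamma (x + (k + 1 : ℕ)) = (x + k) * Real.Gamma (x + k) := by
      rw [Nat.cast_succ, ← add_assoc, Real.Gamma_add_one hxk.ne']
    rw [hΓ, Nat.factorial_succ]
    push_cast
    rw [div_pow]
    field_simp
    ring
  have hlim : Tendsto (fun k : ℕ => ((β + 1 + k) / (β + k)) ^ n * ((x + k) / (1 + k)) * r) atTop
      (𝓝 r) := by
    have h1 : Tendsto (fun k : ℕ => (β + 1 + k) / (β + k)) atTop (𝓝 1) := by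
      simpa using tendsto_add_mul_div_add_mul_atTop_nhds (β + 1) β 1 one_ne_zero
    have h2 : Tendsto (fun k : ℕ => (x + k) / (1 + k)) atTop (𝓝 1) := by
      simpa using tendsto_add_mul_div_add_mul_atTop_nhds x 1 1 one_ne_zero
    simpa using ((h1.pow n).mul h2).mul_const r
  refine summable_of_ratio_test_tendsto_lt_one hr ?_ (hlim.norm.congr' ?_)
  · filter_upwards [hpos] with k ⟨hβk, hxk⟩
    have := Real.Gamma_pos_of_pos hxk
    positivity
  · filter_upwards [hpos, hratio] with k ⟨hβk, hxk⟩ hk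
    have := Real.Gamma_pos_of_pos hxk
    rw [hk, norm_mul ((β + k) ^ n * Real.Gamma (x + k) * (r ^ k / k !)),
      mul_div_cancel_left₀ _ (norm_ne_zero_iff.mpr (by positivity))]

theorem summable_abs_chi_mul_pow_div_factorial {ν α S : ℝ} {n m : ℕ}
    (hΓ : Real.Gamma (α - m - n) ≠ 0) (hS : |S| < 1) :
    Summable fun k : ℕ => |chi ν α n m k| * (S ^ k / k !) :=
  summable_of_isBigO_nat (summable_pow_mul_Gamma_mul_pow_div_factorial _ (α - n) S n hS)
    ((isBigO_abs_left.mpr (isBigO_chi hΓ)).mul (isBigO_refl _ _))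

noncomputable def powDivFactorial {ι : Type*} [Fintype ι] (x : ι → ℝ) (p : ι → ℕ) : ℝ :=
  ∏ i, x i ^ p i / (p i)!

section PowDivFactorial

variable {ι : Type*} [Fintype ι]

theorem powDivFactorial_nonneg {x : ι → ℝ} (hx : 0 ≤ x) (p : ι → ℕ) :
    0 ≤ powDivFactorial x p :=
  prod_nonneg fun i _ => div_nonneg (pow_nonneg (hx i) _) (by positivity)

theorem abs_powDivFactorial (x : ι → ℝ) (p : ι → ℕ) :
    |powDivFactorial x p| = powDivFactorial (fun i => |x i|) p := by
  simp [powDivFactorial, abs_prod, abs_div, abs_pow]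

theorem powDivFactorial_smul (r : ℝ) (x : ι → ℝ) (p : ι → ℕ) :
    powDivFactorial (r • x) p = r ^ (∑ i, p i) * powDivFactorial x p := by
  simp only [powDivFactorial, Pi.smul_apply, smul_eq_mul, mul_pow, mul_div_assoc,
    prod_mul_distrib, prod_pow_eq_pow_sum]

theorem powDivFactorial_sq (u : ι → ℝ) (p : ι → ℕ) :
    powDivFactorial (fun i => u i ^ 2) p =
      (∏ i, u i ^ (2 * p i)) / ∏ i, Real.Gamma ((p i : ℝ) + 1) := by
  simp only [powDivFactorial, pow_mul, prod_div_distrib, Real.Gamma_nat_eq_factorial]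

theorem sum_piAntidiag_powDivFactorial [DecidableEq ι] (x : ι → ℝ) (k : ℕ) :
    ∑ p ∈ piAntidiag univ k, powDivFactorial x p = (∑ i, x i) ^ k / k ! := by
  rw [sum_pow_eq_sum_piAntidiag, sum_div]
  refine sum_congr rfl fun p hp => ?_
  have hspec : ((∏ i, (p i)! : ℕ) : ℝ) * (Nat.multinomial univ p : ℝ) = k ! := by
    rw [← Nat.cast_mul, Nat.multinomial_spec, (mem_piAntidiag.mp hp).1]
  push_cast at hspec
  rw [powDivFactorial, prod_div_distrib, div_eq_div_iff (by positivity) (by positivity)]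
  linear_combination (-∏ i, x i ^ p i) * hspec

theorem summable_mul_powDivFactorial [DecidableEq ι] {c : ℕ → ℝ} {x : ι → ℝ} (hc : 0 ≤ c)
    (hx : 0 ≤ x) (h : Summable fun k => c k * ((∑ i, x i) ^ k / k !)) :
    Summable fun p : ι → ℕ => c (∑ i, p i) * powDivFactorial x p := by
  set f : (ι → ℕ) → ℝ := fun p => c (∑ i, p i) * powDivFactorial x p
  have hf : 0 ≤ f := fun p => mul_nonneg (hc _) (powDivFactorial_nonneg hx p)
  have hpart : ∀ p : ι → ℕ, ∃! k, p ∈ ((piAntidiag univ k : Finset (ι → ℕ)) : Set (ι → ℕ)) := by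
    intro p
    simp [mem_piAntidiag]
  have hfiber : ∀ k, ∑' p : ((piAntidiag univ k : Finset (ι → ℕ)) : Set (ι → ℕ)), f p =
      c k * ((∑ i, x i) ^ k / k !) := by
    intro k
    rw [Finset.tsum_subtype', ← sum_piAntidiag_powDivFactorial, mul_sum]
    refine sum_congr rfl fun p hp => ?_
    simp only [f, (mem_piAntidiag.mp hp).1]
  exact (summable_partition hf hpart).mpr
    ⟨fun k => (piAntidiag univ k).summable f, h.congr fun k => (hfiber k).symm⟩

end PowDivFactorial

theorem Real.hasSum_pow_div_factorial (x : ℝ) :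
    HasSum (fun k : ℕ => x ^ k / k !) (Real.exp x) := by
  rw [Real.exp_eq_exp_ℝ]
  exact NormedSpace.expSeries_div_hasSum_exp x

theorem hasSum_powDivFactorial {n : ℕ} (x : Fin n → ℝ) :
    HasSum (powDivFactorial x) (Real.exp (∑ i, x i)) := by
  induction n with
  | zero => simpa [powDivFactorial] using hasSum_fintype (powDivFactorial x)
  | succ n ih =>
    have hnorm₀ : Summable fun k : ℕ => ‖x 0 ^ k / (k !)‖ := by
      simpa [norm_div, norm_pow] using Real.summable_pow_div_factorial (|x 0|)
    have hnorm : Summable fun p : Fin n → ℕ => ‖powDivFactorial (fun i => x i.succ) p‖ := by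
      simpa [abs_powDivFactorial] using (ih fun i => |x i.succ|).summable
    have hsummable := summable_mul_of_summable_norm (R := ℝ) hnorm₀ hnorm
    have hprod := (Real.hasSum_pow_div_factorial (x 0)).mul (ih fun i => x i.succ) hsummable
    rw [Fin.sum_univ_succ, Real.exp_add]
    refine (Fin.consEquiv fun _ => ℕ).hasSum_iff.mp (hprod.congr_fun fun p => ?_)
    simp only [powDivFactorial, Function.comp_apply, Fin.consEquiv_apply, Fin.prod_univ_succ,
      Fin.cons_zero, Fin.cons_succ]

section DoubleSeries

variable {n : ℕ} {κ : Type*} [Fintype κ] {t : Fin n → ℝ} {s : κ → ℝ} {a b : ℝ}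

theorem hasSum_powDivFactorial_mul (c : ℕ → ℝ) (q : κ → ℕ) :
    HasSum (fun p => powDivFactorial ((b * (a + ∑ j, q j)) • t) p *
        (c (∑ j, q j) * powDivFactorial s q))
      (Real.exp (b * a * ∑ i, t i) *
        (c (∑ j, q j) * powDivFactorial (Real.exp (b * ∑ i, t i) • s) q)) := by
  have hval : Real.exp (∑ i, ((b * (a + ∑ j, q j)) • t) i) * (c (∑ j, q j) * powDivFactorial s q) =
      Real.exp (b * a * ∑ i, t i) *
        (c (∑ j, q j) * powDivFactorial (Real.exp (b * ∑ i, t i) • s) q) := by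
    rw [powDivFactorial_smul, ← Real.exp_nat_mul]
    simp only [Pi.smul_apply, smul_eq_mul, ← mul_sum]
    rw [mul_add, add_mul, Real.exp_add, show b * ((∑ j, q j : ℕ) : ℝ) * ∑ i, t i =
      (∑ j, q j : ℕ) * (b * ∑ i, t i) by ring]
    ring
  exact hval ▸ (hasSum_powDivFactorial ((b * (a + ∑ j, q j)) • t)).mul_right
    (c (∑ j, q j) * powDivFactorial s q)

theorem summable_powDivFactorial_mul_of_nonneg [DecidableEq κ] {c : ℕ → ℝ} (ht : 0 ≤ t)
    (hs : 0 ≤ s) (ha : 0 ≤ a) (hb : 0 ≤ b) (hc₀ : 0 ≤ c)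
    (hc : Summable fun k => c k * ((Real.exp (b * ∑ i, t i) * ∑ j, s j) ^ k / k !)) :
    Summable (fun q => c (∑ j, q j) * powDivFactorial (Real.exp (b * ∑ i, t i) • s) q) ∧
      Summable fun qp : (κ → ℕ) × (Fin n → ℕ) =>
        powDivFactorial ((b * (a + ∑ j, qp.1 j)) • t) qp.2 *
          (c (∑ j, qp.1 j) * powDivFactorial s qp.1) := by
  set E := Real.exp (b * ∑ i, t i)
  have hsum : ∑ j, (E • s) j = E * ∑ j, s j := by simp only [Pi.smul_apply, smul_eq_mul, mul_sum]
  have hG : Summable fun q => c (∑ j, q j) * powDivFactorial (E • s) q :=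
    summable_mul_powDivFactorial hc₀ (smul_nonneg (Real.exp_nonneg _) hs) (by rwa [hsum])
  refine ⟨hG, (summable_prod_of_nonneg fun qp => ?_).mpr
    ⟨fun q => (hasSum_powDivFactorial_mul c q).summable, ?_⟩⟩
  · exact mul_nonneg (powDivFactorial_nonneg (smul_nonneg (by positivity) ht) _)
      (mul_nonneg (hc₀ _) (powDivFactorial_nonneg hs _))
  · simpa only [(hasSum_powDivFactorial_mul c _).tsum_eq] using
      hG.mul_left (Real.exp (b * a * ∑ i, t i))

theorem summable_and_hasSum_powDivFactorial_mul [DecidableEq κ] {c : ℕ → ℝ} (ht : 0 ≤ t)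
    (hs : 0 ≤ s) (ha : 0 ≤ a) (hb : 0 ≤ b)
    (hc : Summable fun k => |c k| * ((Real.exp (b * ∑ i, t i) * ∑ j, s j) ^ k / k !)) :
    Summable (fun q => c (∑ j, q j) * powDivFactorial (Real.exp (b * ∑ i, t i) • s) q) ∧
      HasSum (fun pq : (Fin n → ℕ) × (κ → ℕ) =>
          powDivFactorial ((b * (a + ∑ j, pq.2 j)) • t) pq.1 *
            (c (∑ j, pq.2 j) * powDivFactorial s pq.2))
        (Real.exp (b * a * ∑ i, t i) *
          ∑' q, c (∑ j, q j) * powDivFactorial (Real.exp (b * ∑ i, t i) • s) q) := by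
  obtain ⟨hGabs, hFabs⟩ := summable_powDivFactorial_mul_of_nonneg (κ := κ) (c := fun k => |c k|)
    ht hs ha hb (fun k => abs_nonneg (c k)) hc
  have hG : Summable fun q => c (∑ j, q j) * powDivFactorial (Real.exp (b * ∑ i, t i) • s) q := by
    refine Summable.of_abs (hGabs.congr fun q => ?_)
    rw [abs_mul, abs_of_nonneg (powDivFactorial_nonneg (smul_nonneg (Real.exp_nonneg _) hs) q)]
  have hF : Summable fun qp : (κ → ℕ) × (Fin n → ℕ) =>
      powDivFactorial ((b * (a + ∑ j, qp.1 j)) • t) qp.2 *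
        (c (∑ j, qp.1 j) * powDivFactorial s qp.1) := by
    refine Summable.of_abs (hFabs.congr fun qp => ?_)
    rw [abs_mul, abs_mul, abs_of_nonneg (powDivFactorial_nonneg hs _),
      abs_of_nonneg (powDivFactorial_nonneg (smul_nonneg (by positivity) ht) _)]
  have htsum := (hF.hasSum.prod_fiberwise fun q => hasSum_powDivFactorial_mul c q).unique
    (hG.hasSum.mul_left (Real.exp (b * a * ∑ i, t i)))
  refine ⟨hG, (Equiv.prodComm _ _).hasSum_iff.mp ?_⟩
  rw [← htsum]
  exact hF.hasSum

end DoubleSeries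

theorem pow_sum_mul_div_prod_Gamma_eq_powDivFactorial {ι κ : Type*} [Fintype ι] [Fintype κ]
    (A c : ℝ) (u : ι → ℝ) (v : κ → ℝ) (p : ι → ℕ) (q : κ → ℕ) :
    A ^ (∑ i, p i) * c / ((∏ i, Real.Gamma ((p i : ℝ) + 1)) * ∏ j, Real.Gamma ((q j : ℝ) + 1)) *
        (∏ i, u i ^ (2 * p i)) * ∏ j, v j ^ (2 * q j) =
      powDivFactorial (A • fun i => u i ^ 2) p * (c * powDivFactorial (fun j => v j ^ 2) q) := by
  rw [powDivFactorial_smul, powDivFactorial_sq, powDivFactorial_sq]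
  ring

theorem psi_mul_Gamma_div_eq_powDivFactorial {κ : Type*} [Fintype κ] {ν α : ℝ} {n m : ℕ}
    (hα : 0 < α) (v : κ → ℝ) (q : κ → ℕ) :
    psi ν α n m (∑ i, q i) * Real.Gamma ((∑ i, q i : ℕ) + α) /
        (Real.Gamma α * ∏ i, Real.Gamma ((q i : ℝ) + 1)) * ∏ i, v i ^ (2 * q i) =
      Real.Gamma (α - m - n) / Real.Gamma α *
        (chi ν α n m (∑ i, q i) * powDivFactorial (fun i => v i ^ 2) q) := by
  have : Real.Gamma (α + (∑ i, q i : ℕ)) ≠ 0 := (Real.Gamma_pos_of_pos (by positivity)).ne'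
  rw [psi, powDivFactorial_sq, add_comm _ α]
  field_simp

theorem norm_exp_half_smul_apply_sq {ι : Type*} [Fintype ι] (x : ℝ) (w : EuclideanSpace ℂ ι) :
    (fun i => ‖(Real.exp (x / 2) • w) i‖ ^ 2) = Real.exp x • fun i => ‖w i‖ ^ 2 := by
  ext i
  rw [PiLp.smul_apply, norm_smul, mul_pow, Real.norm_eq_abs, sq_abs, sq, ← Real.exp_add,
    add_halves, Pi.smul_apply, smul_eq_mul]

theorem stmt1_general (μ ν : ℝ) (hμ : 0 < μ) (hν : -1 < ν) (n m : ℕ)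
    (α : ℝ) (hα : (m : ℝ) + n < α) :
    ∀ z : EuclideanSpace ℂ (Fin n), ∀ w : EuclideanSpace ℂ (Fin m),
      ‖w‖ ^ 2 < Real.exp (-μ * ‖z‖ ^ 2) →
      Summable (fun pq : (Fin n → ℕ) × (Fin m → ℕ) =>
        (μ * ((ν + 1) * α + (∑ j, pq.2 j))) ^ (∑ i, pq.1 i) * chi ν α n m (∑ j, pq.2 j) /
          ((∏ i, Real.Gamma ((pq.1 i : ℝ) + 1)) * ∏ j, Real.Gamma ((pq.2 j : ℝ) + 1)) *
          (∏ i, ‖z i‖ ^ (2 * pq.1 i)) * ∏ j, ‖w j‖ ^ (2 * pq.2 j)) ∧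
      Summable (fun q : Fin m → ℕ =>
        psi ν α n m (∑ i, q i) * Real.Gamma ((∑ i, q i : ℕ) + α) /
          (Real.Gamma α * ∏ i, Real.Gamma ((q i : ℝ) + 1)) *
          ∏ i, ‖(Real.exp (μ * ‖z‖ ^ 2 / 2) • w) i‖ ^ (2 * q i)) ∧
      (∑' pq : (Fin n → ℕ) × (Fin m → ℕ),
        (μ * ((ν + 1) * α + (∑ j, pq.2 j))) ^ (∑ i, pq.1 i) * chi ν α n m (∑ j, pq.2 j) /
          ((∏ i, Real.Gamma ((pq.1 i : ℝ) + 1)) * ∏ j, Real.Gamma ((pq.2 j : ℝ) + 1)) *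
          (∏ i, ‖z i‖ ^ (2 * pq.1 i)) * ∏ j, ‖w j‖ ^ (2 * pq.2 j))
      = poch (α - m - n) (m + n) * Real.exp (μ * (ν + 1) * α * ‖z‖ ^ 2) *
        ∑' q : Fin m → ℕ,
          psi ν α n m (∑ i, q i) * Real.Gamma ((∑ i, q i : ℕ) + α) /
            (Real.Gamma α * ∏ i, Real.Gamma ((q i : ℝ) + 1)) *
            ∏ i, ‖(Real.exp (μ * ‖z‖ ^ 2 / 2) • w) i‖ ^ (2 * q i) := by
  intro z w hw
  have hz : ∑ i, ‖z i‖ ^ 2 = ‖z‖ ^ 2 := (EuclideanSpace.norm_sq_eq z).symm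
  have hα₀ : 0 < α := by linarith [(by positivity : (0 : ℝ) ≤ m + n)]
  have hΓ : 0 < Real.Gamma (α - m - n) := Real.Gamma_pos_of_pos (by linarith)
  have hS : Real.exp (μ * ‖z‖ ^ 2) * ‖w‖ ^ 2 < 1 := by
    have := mul_lt_mul_of_pos_left hw (Real.exp_pos (μ * ‖z‖ ^ 2))
    rwa [← Real.exp_add, neg_mul, add_neg_cancel, Real.exp_zero] at this
  have hχ : Summable fun k =>
      |chi ν α n m k| * ((Real.exp (μ * ∑ i, ‖z i‖ ^ 2) * ∑ j, ‖w j‖ ^ 2) ^ k / k !) := by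
    rw [hz, ← EuclideanSpace.norm_sq_eq w]
    have : 0 ≤ Real.exp (μ * ‖z‖ ^ 2) * ‖w‖ ^ 2 := by positivity
    exact summable_abs_chi_mul_pow_div_factorial hΓ.ne' (abs_lt.mpr ⟨by linarith, hS⟩)
  obtain ⟨hG, hF⟩ := summable_and_hasSum_powDivFactorial_mul (t := fun i => ‖z i‖ ^ 2)
    (s := fun j => ‖w j‖ ^ 2) (a := (ν + 1) * α) (fun i => sq_nonneg _) (fun j => sq_nonneg _)
    (mul_nonneg (by linarith) hα₀.le) hμ.le hχ
  rw [hz] at hF hG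
  have hpoch : poch (α - m - n) (m + n) * Real.Gamma (α - m - n) = Real.Gamma α := by
    rw [mul_comm, ← Gamma_add_nat_eq_Gamma_mul_poch (by linarith)]
    push_cast
    ring_nf
  simp only [pow_sum_mul_div_prod_Gamma_eq_powDivFactorial,
    psi_mul_Gamma_div_eq_powDivFactorial hα₀, norm_exp_half_smul_apply_sq]
  refine ⟨hF.summable, hG.mul_left _, ?_⟩
  have hpoch₀ : poch (α - m - n) (m + n) ≠ 0 :=
    left_ne_zero_of_mul (hpoch ▸ (Real.Gamma_pos_of_pos hα₀).ne')
  rw [hF.tsum_eq, tsum_mul_left, mul_assoc μ (ν + 1) α, ← hpoch]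
  field_simp

/-- The diagonal of the Bergman kernel of the weighted Hilbert space `H_α` on the
Fock-Bargmann-Hartogs domain `D_{n,m}(μ)`: the two series converge and
`∑_{p,q} (μ((ν+1)α+|q|))^{|p|} χ(α,|q|) / (∏Γ(pᵢ+1)∏Γ(qⱼ+1)) |z|^{2p}|w|^{2q}
  = (α-m-n)_{m+n} e^{μ(ν+1)α‖z‖²} ∑_q ψ(α,|q|) Γ(|q|+α)/(Γ(α)∏Γ(qᵢ+1)) |w̃|^{2q}`. -/
theorem stmt1 (μ ν : ℝ) (hμ : 0 < μ) (hν : -1 < ν) (n m : ℕ) (hn : 0 < n) (hm : 0 < m)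
    (α : ℝ) (hα : (m : ℝ) + n < α) :
    ∀ z : EuclideanSpace ℂ (Fin n), ∀ w : EuclideanSpace ℂ (Fin m),
      ‖w‖ ^ 2 < Real.exp (-μ * ‖z‖ ^ 2) →
      Summable (fun pq : (Fin n → ℕ) × (Fin m → ℕ) =>
        (μ * ((ν + 1) * α + (∑ j, pq.2 j))) ^ (∑ i, pq.1 i) * chi ν α n m (∑ j, pq.2 j) /
          ((∏ i, Real.Gamma ((pq.1 i : ℝ) + 1)) * ∏ j, Real.Gamma ((pq.2 j : ℝ) + 1)) *
          (∏ i, ‖z i‖ ^ (2 * pq.1 i)) * ∏ j, ‖w j‖ ^ (2 * pq.2 j)) ∧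
      Summable (fun q : Fin m → ℕ =>
        psi ν α n m (∑ i, q i) * Real.Gamma ((∑ i, q i : ℕ) + α) /
          (Real.Gamma α * ∏ i, Real.Gamma ((q i : ℝ) + 1)) *
          ∏ i, ‖(Real.exp (μ * ‖z‖ ^ 2 / 2) • w) i‖ ^ (2 * q i)) ∧
      (∑' pq : (Fin n → ℕ) × (Fin m → ℕ),
        (μ * ((ν + 1) * α + (∑ j, pq.2 j))) ^ (∑ i, pq.1 i) * chi ν α n m (∑ j, pq.2 j) /
          ((∏ i, Real.Gamma ((pq.1 i : ℝ) + 1)) * ∏ j, Real.Gamma ((pq.2 j : ℝ) + 1)) *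
          (∏ i, ‖z i‖ ^ (2 * pq.1 i)) * ∏ j, ‖w j‖ ^ (2 * pq.2 j))
      = poch (α - m - n) (m + n) * Real.exp (μ * (ν + 1) * α * ‖z‖ ^ 2) *
        ∑' q : Fin m → ℕ,
          psi ν α n m (∑ i, q i) * Real.Gamma ((∑ i, q i : ℕ) + α) /
            (Real.Gamma α * ∏ i, Real.Gamma ((q i : ℝ) + 1)) *
            ∏ i, ‖(Real.exp (μ * ‖z‖ ^ 2 / 2) • w) i‖ ^ (2 * q i) :=
  stmt1_general μ ν hμ hν n m α hα
end

section
/- Let μ > 0, let n, m be positive integers, and let a ∈ ℂ^n. Define φ_a : ℂ^n × ℂ^m → ℂ^n × ℂ^m by φ_a(z,w) := (z-a, exp(μ⟨z,a⟩ - μ‖a‖²/2)·w), where ⟨z,a⟩ := ∑_{j=1}^n z_j·conj(a_j). Then φ_a is holomorphic, maps D_{n,m}(μ) into D_{n,m}(μ), and φ_{-a} ∘ φ_a is the identity on ℂ^n × ℂ^m; consequently φ_a restricts to a biholomorphic automorphism of D_{n,m}(μ) with inverse φ_{-a}. -/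
open Finset

/-- The map `φ_a(z,w) = (z-a, e^{μ⟨z,a⟩-μ‖a‖²/2} w)` on `ℂⁿ × ℂᵐ`,
where `⟨z,a⟩ = ∑ⱼ zⱼ conj(aⱼ)`. -/
noncomputable def phiMap (μ : ℝ) (n m : ℕ) (a : EuclideanSpace ℂ (Fin n)) :
    EuclideanSpace ℂ (Fin n) × EuclideanSpace ℂ (Fin m) →
      EuclideanSpace ℂ (Fin n) × EuclideanSpace ℂ (Fin m) :=
  fun p => (p.1 - a,
    Complex.exp ((μ : ℂ) * (∑ j, p.1 j * (starRingEnd ℂ) (a j)) -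
      (μ : ℂ) * ((‖a‖ : ℂ)) ^ 2 / 2) • p.2)

/-!
The weight `ρ(z, w) = ‖w‖² e^{μ‖z‖²}` is invariant under `φ_a`: the multiplier has modulus
`e^{μ (2 Re⟨z,a⟩ - ‖a‖²)}`, which is exactly what `‖z - a‖² = ‖z‖² - 2 Re⟨z,a⟩ + ‖a‖²` demands.
As the domain is `{ρ < 1}`, it is preserved. Composing `φ_{-a}` with `φ_a`, the exponents of the
two multipliers cancel.
-/

theorem lt_exp_neg_iff_mul_exp_lt_one (x t : ℝ) : x < Real.exp (-t) ↔ x * Real.exp t < 1 := by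
  rw [← mul_lt_mul_iff_of_pos_right (Real.exp_pos t), ← Real.exp_add, neg_add_cancel,
    Real.exp_zero]

theorem norm_exp_smul_sq {F : Type*} [NormedAddCommGroup F] [NormedSpace ℂ F] (c : ℂ) (w : F) :
    ‖Complex.exp c • w‖ ^ 2 = Real.exp (2 * c.re) * ‖w‖ ^ 2 := by
  rw [norm_smul, mul_pow, Complex.norm_exp, ← Real.exp_nat_mul]
  norm_num

namespace FockShift

open scoped InnerProductSpace

variable {E F : Type*} [NormedAddCommGroup E] [InnerProductSpace ℂ E]
  [NormedAddCommGroup F] [NormedSpace ℂ F]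

noncomputable def shift (μ : ℝ) (a : E) (p : E × F) : E × F :=
  (p.1 - a, Complex.exp ((μ : ℂ) * ⟪a, p.1⟫_ℂ - (μ : ℂ) * (‖a‖ : ℂ) ^ 2 / 2) • p.2)

noncomputable def weight (μ : ℝ) (p : E × F) : ℝ :=
  ‖p.2‖ ^ 2 * Real.exp (μ * ‖p.1‖ ^ 2)

theorem differentiable_shift (μ : ℝ) (a : E) : Differentiable ℂ (shift (F := F) μ a) := by
  unfold shift
  refine (differentiable_fst.sub_const a).prodMk (Differentiable.smul ?_ differentiable_snd)
  refine Complex.differentiable_exp.comp ((differentiable_const _).mul ?_ |>.sub_const _)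
  exact (innerSL ℂ a).differentiable.comp differentiable_fst

theorem weight_shift (μ : ℝ) (a : E) (p : E × F) :
    weight μ (shift μ a p) = weight μ p := by
  obtain ⟨z, w⟩ := p
  have hre : ((μ : ℂ) * ⟪a, z⟫_ℂ - (μ : ℂ) * (‖a‖ : ℂ) ^ 2 / 2).re
      = μ * RCLike.re ⟪z, a⟫_ℂ - μ * ‖a‖ ^ 2 / 2 := by
    rw [← inner_re_symm]
    simp [Complex.mul_re, ← Complex.ofReal_pow]
  simp only [weight, shift, norm_exp_smul_sq, hre, norm_sub_sq (𝕜 := ℂ)]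
  rw [mul_comm (Real.exp _), mul_assoc, ← Real.exp_add]
  ring_nf

theorem shift_mapsTo (μ : ℝ) (a : E) (p : E × F)
    (hp : ‖p.2‖ ^ 2 < Real.exp (-μ * ‖p.1‖ ^ 2)) :
    ‖(shift μ a p).2‖ ^ 2 < Real.exp (-μ * ‖(shift μ a p).1‖ ^ 2) := by
  rw [neg_mul, lt_exp_neg_iff_mul_exp_lt_one] at hp ⊢
  exact (weight_shift μ a p).trans_lt hp

theorem shift_neg_shift (μ : ℝ) (a : E) (p : E × F) : shift μ (-a) (shift μ a p) = p := by
  obtain ⟨z, w⟩ := p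
  have hexp : ((μ : ℂ) * ⟪-a, z - a⟫_ℂ - (μ : ℂ) * (‖-a‖ : ℂ) ^ 2 / 2) +
      ((μ : ℂ) * ⟪a, z⟫_ℂ - (μ : ℂ) * (‖a‖ : ℂ) ^ 2 / 2) = 0 := by
    have haa : ⟪a, a⟫_ℂ = (‖a‖ : ℂ) ^ 2 := by exact_mod_cast inner_self_eq_norm_sq_to_K a
    rw [inner_neg_left, inner_sub_right, haa, norm_neg]
    ring
  simp only [shift, smul_smul, ← Complex.exp_add, hexp, Complex.exp_zero, one_smul,
    sub_neg_eq_add, sub_add_cancel]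

end FockShift

open FockShift

theorem sum_mul_conj_eq_inner {n : ℕ} (a z : EuclideanSpace ℂ (Fin n)) :
    ∑ j, z j * (starRingEnd ℂ) (a j) = inner ℂ a z := by
  simp [PiLp.inner_apply, RCLike.inner_apply]

theorem phiMap_eq_shift (μ : ℝ) (n m : ℕ) (a : EuclideanSpace ℂ (Fin n)) :
    phiMap μ n m a = shift μ a := by
  funext p
  simp only [phiMap, shift, sum_mul_conj_eq_inner]

theorem stmt5_general (μ : ℝ) (n m : ℕ)
    (a : EuclideanSpace ℂ (Fin n)) :
    Differentiable ℂ (phiMap μ n m a) ∧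
    (∀ p : EuclideanSpace ℂ (Fin n) × EuclideanSpace ℂ (Fin m),
      ‖p.2‖ ^ 2 < Real.exp (-μ * ‖p.1‖ ^ 2) →
      ‖(phiMap μ n m a p).2‖ ^ 2 < Real.exp (-μ * ‖(phiMap μ n m a p).1‖ ^ 2)) ∧
    (∀ p : EuclideanSpace ℂ (Fin n) × EuclideanSpace ℂ (Fin m),
      phiMap μ n m (-a) (phiMap μ n m a p) = p) := by
  simp only [phiMap_eq_shift]
  exact ⟨differentiable_shift μ a, shift_mapsTo μ a, shift_neg_shift μ a⟩

/-- `φ_a` is holomorphic, maps `D_{n,m}(μ)` into itself, and `φ_{-a} ∘ φ_a = id`;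
hence `φ_a` restricts to an automorphism of the Fock-Bargmann-Hartogs domain. -/
theorem stmt5 (μ : ℝ) (hμ : 0 < μ) (n m : ℕ) (hn : 0 < n) (hm : 0 < m)
    (a : EuclideanSpace ℂ (Fin n)) :
    Differentiable ℂ (phiMap μ n m a) ∧
    (∀ p : EuclideanSpace ℂ (Fin n) × EuclideanSpace ℂ (Fin m),
      ‖p.2‖ ^ 2 < Real.exp (-μ * ‖p.1‖ ^ 2) →
      ‖(phiMap μ n m a p).2‖ ^ 2 < Real.exp (-μ * ‖(phiMap μ n m a p).1‖ ^ 2)) ∧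
    (∀ p : EuclideanSpace ℂ (Fin n) × EuclideanSpace ℂ (Fin m),
      phiMap μ n m (-a) (phiMap μ n m a p) = p) :=
  stmt5_general μ n m a
end

section
/- Let m be a positive integer, let k ∈ ℕ, let α ∈ ℝ with α > m+k-1, and let q = (q_1,…,q_m) with each q_i a positive real number. Then the function x ↦ (1-∑_{i=1}^m x_i)^{α-m-k} · ∏_{i=1}^m x_i^{q_i} is Lebesgue integrable on the open simplex {x ∈ ℝ^m : x_i > 0 for all i, ∑_{i=1}^m x_i < 1}, and its integral equals ∏_{i=1}^m Γ(q_i+1) · Γ(α-m-k+1) / Γ(α+|q|-k+1), where |q| := ∑_{i=1}^m q_i. -/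
/-!
Induction on `m`. Slicing the simplex by its first coordinate `t`, the slice is the
`m`-dimensional simplex scaled by `1 - t`, and the integrand is homogeneous along it, so the
integral factors as a Beta integral in `t` times the `m`-dimensional integral; the Beta values
`Γ(u)Γ(v)/Γ(u+v)` then telescope into the product formula. Working with the lower integral of the
nonnegative integrand, Tonelli applies with no integrability side conditions, and integrability
falls out of the finiteness of the result.
-/

open MeasureTheory Set
open scoped ENNReal Pointwise

theorem lintegral_Ioo_rpow_mul_one_sub_rpow {p r : ℝ} (hp : -1 < p) (hr : -1 < r) :
    ∫⁻ t in Ioo (0 : ℝ) 1, ENNReal.ofReal (t ^ p * (1 - t) ^ r) =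
      ENNReal.ofReal (ProbabilityTheory.beta (p + 1) (r + 1)) := by
  have hp' : 0 < p + 1 := by linarith
  have hr' : 0 < r + 1 := by linarith
  have hB := ProbabilityTheory.beta_pos hp' hr'
  have h := ProbabilityTheory.lintegral_betaPDF_eq_one hp' hr'
  simp only [ProbabilityTheory.lintegral_betaPDF, add_sub_cancel_right, mul_assoc] at h
  simp_rw [ENNReal.ofReal_mul (one_div_pos.2 hB).le] at h
  rw [lintegral_const_mul' _ _ ENNReal.ofReal_ne_top, one_div,
    ENNReal.ofReal_inv_of_pos hB] at h
  rw [← ENNReal.mul_inv_cancel_left (ENNReal.ofReal_pos.2 hB).ne' ENNReal.ofReal_ne_top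
    (b := ∫⁻ t in Ioo (0 : ℝ) 1, _), h, mul_one]

theorem setLIntegral_smul_set {E : Type*} [NormedAddCommGroup E] [NormedSpace ℝ E]
    [MeasurableSpace E] [BorelSpace E] [FiniteDimensional ℝ E] (μ : Measure E)
    [μ.IsAddHaarMeasure] (f : E → ℝ≥0∞) {R : ℝ} (hR : 0 < R) (s : Set E) :
    ∫⁻ x in R • s, f x ∂μ = ENNReal.ofReal (R ^ Module.finrank ℝ E) * ∫⁻ x in s, f (R • x) ∂μ := by
  let e : E ≃ᵐ E := (Homeomorph.smul (Units.mk0 R hR.ne')).toMeasurableEquiv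
  have hpre : e ⁻¹' (R • s) = s := by
    change (R • ·) ⁻¹' (R • s) = s
    rw [preimage_smul₀ hR.ne', inv_smul_smul₀ hR.ne']
  have hRd : 0 < R ^ Module.finrank ℝ E := pow_pos hR _
  calc ∫⁻ x in R • s, f x ∂μ
      = ENNReal.ofReal (R ^ Module.finrank ℝ E) *
          ∫⁻ x in R • s, f x ∂(Measure.map (R • ·) μ) := by
        rw [Measure.map_addHaar_smul μ hR.ne', Measure.restrict_smul, lintegral_smul_measure,
          smul_eq_mul, ← mul_assoc, ← ENNReal.ofReal_mul hRd.le, abs_of_pos (inv_pos.2 hRd),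
          mul_inv_cancel₀ hRd.ne', ENNReal.ofReal_one, one_mul]
    _ = ENNReal.ofReal (R ^ Module.finrank ℝ E) * ∫⁻ x in s, f (R • x) ∂μ := by
        rw [show Measure.map (R • ·) μ = Measure.map e μ from rfl,
          e.measurableEmbedding.restrict_map, e.measurableEmbedding.lintegral_map, hpre]
        rfl

theorem setLIntegral_prod {α β : Type*} [MeasurableSpace α] [MeasurableSpace β]
    (μ : Measure α) (ν : Measure β) [SFinite ν] {s : Set (α × β)} (hs : MeasurableSet s)
    {f : α × β → ℝ≥0∞} (hf : Measurable f) :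
    ∫⁻ z in s, f z ∂(μ.prod ν) = ∫⁻ x, ∫⁻ y in Prod.mk x ⁻¹' s, f (x, y) ∂ν ∂μ := by
  rw [← lintegral_indicator hs, lintegral_prod _ (hf.indicator hs).aemeasurable]
  congr 1 with x
  rw [← lintegral_indicator (measurable_prodMk_left hs)]
  rfl

def openSimplex (m : ℕ) : Set (Fin m → ℝ) := {x | (∀ i, 0 < x i) ∧ ∑ i, x i < 1}

noncomputable def dirichletWeight {m : ℕ} (a : ℝ) (q : Fin m → ℝ) (x : Fin m → ℝ) : ℝ :=
  (1 - ∑ i, x i) ^ a * ∏ i, x i ^ q i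

theorem measurableSet_openSimplex (m : ℕ) : MeasurableSet (openSimplex m) := by
  unfold openSimplex
  measurability

theorem measurable_dirichletWeight {m : ℕ} (a : ℝ) (q : Fin m → ℝ) :
    Measurable (dirichletWeight a q) := by
  unfold dirichletWeight
  fun_prop

theorem dirichletWeight_nonneg {m : ℕ} (a : ℝ) (q : Fin m → ℝ) {x : Fin m → ℝ}
    (hx : x ∈ openSimplex m) : 0 ≤ dirichletWeight a q x :=
  mul_nonneg (Real.rpow_nonneg (by linarith [hx.2]) a)
    (Finset.prod_nonneg fun i _ => Real.rpow_nonneg (hx.1 i).le _)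

theorem mem_smul_openSimplex_iff {m : ℕ} {c : ℝ} (hc : 0 < c) {y : Fin m → ℝ} :
    y ∈ c • openSimplex m ↔ (∀ i, 0 < y i) ∧ ∑ i, y i < c := by
  simp only [mem_smul_set_iff_inv_smul_mem₀ hc.ne', openSimplex, mem_ofPred_eq, Pi.smul_apply,
    smul_eq_mul, ← Finset.mul_sum, inv_mul_lt_one₀ hc, mul_pos_iff_of_pos_left (inv_pos.2 hc)]

theorem cons_mem_openSimplex_iff {m : ℕ} {t : ℝ} {y : Fin m → ℝ} :
    (Fin.cons t y : Fin (m + 1) → ℝ) ∈ openSimplex (m + 1) ↔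
      t ∈ Ioo 0 1 ∧ y ∈ (1 - t) • openSimplex m := by
  change ((∀ i, 0 < (Fin.cons t y : Fin (m + 1) → ℝ) i) ∧
    ∑ i, (Fin.cons t y : Fin (m + 1) → ℝ) i < 1) ↔ _
  simp only [Fin.forall_fin_succ, Fin.sum_univ_succ, Fin.cons_zero, Fin.cons_succ]
  constructor
  · rintro ⟨⟨ht, hy⟩, hsum⟩
    have ht1 : t < 1 := by linarith [Finset.sum_nonneg fun i (_ : i ∈ Finset.univ) => (hy i).le]
    exact ⟨⟨ht, ht1⟩, (mem_smul_openSimplex_iff (sub_pos.2 ht1)).2 ⟨hy, by linarith⟩⟩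
  · rintro ⟨ht, hy⟩
    obtain ⟨hy, hsum⟩ := (mem_smul_openSimplex_iff (sub_pos.2 ht.2)).1 hy
    exact ⟨⟨ht.1, hy⟩, by linarith⟩

theorem lintegral_openSimplex_succ {m : ℕ} {f : (Fin (m + 1) → ℝ) → ℝ≥0∞} (hf : Measurable f) :
    ∫⁻ x in openSimplex (m + 1), f x =
      ∫⁻ t in Ioo 0 1, ∫⁻ y in (1 - t) • openSimplex m, f (Fin.cons t y) := by
  let e := (MeasurableEquiv.piFinSuccAbove (fun _ : Fin (m + 1) => ℝ) 0).symm
  have he : MeasurePreserving e := (volume_preserving_piFinSuccAbove _ 0).symm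
  rw [← he.setLIntegral_comp_preimage (measurableSet_openSimplex _) hf, Measure.volume_eq_prod,
    setLIntegral_prod _ _ ((measurableSet_openSimplex _).preimage he.measurable)
      (f := fun p => f (e p)) (hf.comp he.measurable), ← lintegral_indicator measurableSet_Ioo]
  congr 1 with t
  have he_apply (y : Fin m → ℝ) : e (t, y) = Fin.cons t y := by
    simp [e, MeasurableEquiv.piFinSuccAbove_symm_apply, Fin.consEquiv]
  have hslice : Prod.mk t ⁻¹' (e ⁻¹' openSimplex (m + 1)) =
      {y | t ∈ Ioo 0 1 ∧ y ∈ (1 - t) • openSimplex m} := by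
    ext y
    simp only [mem_preimage, he_apply, cons_mem_openSimplex_iff, mem_ofPred_eq]
  by_cases ht : t ∈ Ioo 0 1
  · simp [hslice, ht, he_apply]
  · simp [hslice, ht]

theorem dirichletWeight_cons_smul {m : ℕ} (a : ℝ) (q : Fin (m + 1) → ℝ) {t : ℝ} (ht : t < 1)
    {y : Fin m → ℝ} (hy : y ∈ openSimplex m) :
    dirichletWeight a q (Fin.cons t ((1 - t) • y)) =
      t ^ q 0 * (1 - t) ^ (a + ∑ j, Fin.tail q j) * dirichletWeight a (Fin.tail q) y := by
  have hc : 0 < 1 - t := sub_pos.2 ht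
  simp only [dirichletWeight, Fin.sum_univ_succ, Fin.prod_univ_succ, Fin.cons_zero,
    Fin.cons_succ, Pi.smul_apply, smul_eq_mul, ← Finset.mul_sum, Fin.tail]
  rw [show 1 - (t + (1 - t) * ∑ i, y i) = (1 - t) * (1 - ∑ i, y i) by ring,
    Real.mul_rpow hc.le (by linarith [hy.2]),
    Finset.prod_congr rfl fun j _ => Real.mul_rpow hc.le (hy.1 j).le,
    Finset.prod_mul_distrib, ← Real.rpow_sum_of_pos hc, Real.rpow_add hc]
  ring

theorem neg_natCast_le_sum {m : ℕ} {q : Fin m → ℝ} (hq : ∀ i, -1 < q i) :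
    -(m : ℝ) ≤ ∑ i, q i := by
  simpa using Finset.sum_le_sum (s := Finset.univ) (f := fun _ => (-1 : ℝ)) fun i _ => (hq i).le

theorem lintegral_dirichletWeight {m : ℕ} {a : ℝ} (ha : -1 < a) {q : Fin m → ℝ}
    (hq : ∀ i, -1 < q i) :
    ∫⁻ x in openSimplex m, ENNReal.ofReal (dirichletWeight a q x) =
      ENNReal.ofReal (Real.Gamma (a + 1) * (∏ i, Real.Gamma (q i + 1)) /
        Real.Gamma (a + ∑ i, q i + m + 1)) := by
  induction m with
  | zero =>
    have hΓ : Real.Gamma (a + 1) ≠ 0 := (Real.Gamma_pos_of_pos (by linarith)).ne'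
    simp [openSimplex, dirichletWeight, volume_pi, hΓ]
  | succ m ih =>
    have hQ : -1 < a + ∑ j, Fin.tail q j + m := by
      linarith [neg_natCast_le_sum (q := Fin.tail q) fun j => hq j.succ]
    calc ∫⁻ x in openSimplex (m + 1), ENNReal.ofReal (dirichletWeight a q x)
        = ∫⁻ t in Ioo 0 1, ∫⁻ y in (1 - t) • openSimplex m,
            ENNReal.ofReal (dirichletWeight a q (Fin.cons t y)) :=
          lintegral_openSimplex_succ (measurable_dirichletWeight a q).ennreal_ofReal
      _ = ∫⁻ t in Ioo 0 1, ENNReal.ofReal (t ^ q 0 * (1 - t) ^ (a + ∑ j, Fin.tail q j + m)) *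
            ∫⁻ y in openSimplex m, ENNReal.ofReal (dirichletWeight a (Fin.tail q) y) := by
          refine setLIntegral_congr_fun measurableSet_Ioo fun t ht => ?_
          have hc : 0 < 1 - t := sub_pos.2 ht.2
          rw [setLIntegral_smul_set _ _ hc, Module.finrank_fin_fun,
            setLIntegral_congr_fun (measurableSet_openSimplex m) fun y hy => by
              rw [dirichletWeight_cons_smul a q ht.2 hy, ENNReal.ofReal_mul
                (mul_nonneg (Real.rpow_nonneg ht.1.le _) (Real.rpow_nonneg hc.le _))],
            lintegral_const_mul' _ _ ENNReal.ofReal_ne_top, ← mul_assoc,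
            ← ENNReal.ofReal_mul (by positivity), Real.rpow_add hc _ m, Real.rpow_natCast]
          congr 2
          ring
      _ = ENNReal.ofReal (ProbabilityTheory.beta (q 0 + 1) (a + ∑ j, Fin.tail q j + m + 1)) *
            ∫⁻ y in openSimplex m, ENNReal.ofReal (dirichletWeight a (Fin.tail q) y) := by
          rw [lintegral_mul_const _ (by fun_prop), lintegral_Ioo_rpow_mul_one_sub_rpow (hq 0) hQ]
      _ = _ := by
          rw [ih (q := Fin.tail q) fun j => hq j.succ, ← ENNReal.ofReal_mul
            (ProbabilityTheory.beta_pos (by linarith [hq 0]) (by linarith)).le]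
          congr 1
          simp only [Fin.tail] at hQ ⊢
          have hΓ : Real.Gamma (a + ∑ j : Fin m, q j.succ + m + 1) ≠ 0 :=
            (Real.Gamma_pos_of_pos (by linarith)).ne'
          rw [ProbabilityTheory.beta, Fin.prod_univ_succ, Fin.sum_univ_succ,
            show a + (q 0 + ∑ i : Fin m, q i.succ) + ↑(m + 1) + 1 =
              q 0 + 1 + (a + ∑ j : Fin m, q j.succ + m + 1) by push_cast; ring]
          field_simp

theorem integrableOn_dirichletWeight {m : ℕ} {a : ℝ} (ha : -1 < a) {q : Fin m → ℝ}
    (hq : ∀ i, -1 < q i) : IntegrableOn (dirichletWeight a q) (openSimplex m) := by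
  refine ⟨(measurable_dirichletWeight a q).aestronglyMeasurable, ?_⟩
  rw [hasFiniteIntegral_iff_ofReal (ae_restrict_of_forall_mem (measurableSet_openSimplex m)
    fun x hx => dirichletWeight_nonneg a q hx), lintegral_dirichletWeight ha hq]
  exact ENNReal.ofReal_lt_top

theorem setIntegral_dirichletWeight {m : ℕ} {a : ℝ} (ha : -1 < a) {q : Fin m → ℝ}
    (hq : ∀ i, -1 < q i) :
    ∫ x in openSimplex m, dirichletWeight a q x =
      Real.Gamma (a + 1) * (∏ i, Real.Gamma (q i + 1)) / Real.Gamma (a + ∑ i, q i + m + 1) := by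
  have hsum := neg_natCast_le_sum hq
  rw [integral_eq_lintegral_of_nonneg_ae (ae_restrict_of_forall_mem (measurableSet_openSimplex m)
      fun x hx => dirichletWeight_nonneg a q hx)
      (measurable_dirichletWeight a q).aestronglyMeasurable,
    lintegral_dirichletWeight ha hq, ENNReal.toReal_ofReal]
  exact div_nonneg (mul_nonneg (Real.Gamma_pos_of_pos (by linarith)).le
    (Finset.prod_nonneg fun i _ => (Real.Gamma_pos_of_pos (by linarith [hq i])).le))
    (Real.Gamma_pos_of_pos (by linarith)).le

theorem stmt8_general (m : ℕ) (k : ℕ) (α : ℝ) (hα : (m : ℝ) + k - 1 < α)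
    (q : Fin m → ℝ) (hq : ∀ i, 0 < q i) :
    IntegrableOn
      (fun x : Fin m → ℝ => (1 - ∑ i, x i) ^ (α - m - k) * ∏ i, (x i) ^ (q i))
      {x : Fin m → ℝ | (∀ i, 0 < x i) ∧ ∑ i, x i < 1} volume ∧
    ∫ x in {x : Fin m → ℝ | (∀ i, 0 < x i) ∧ ∑ i, x i < 1},
        (1 - ∑ i, x i) ^ (α - m - k) * ∏ i, (x i) ^ (q i)
      = (∏ i, Real.Gamma (q i + 1)) * Real.Gamma (α - m - k + 1) /
          Real.Gamma (α + (∑ i, q i) - k + 1) := by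
  have ha : -1 < α - m - k := by linarith
  have hq' : ∀ i, -1 < q i := fun i => by linarith [hq i]
  refine ⟨integrableOn_dirichletWeight ha hq', (setIntegral_dirichletWeight ha hq').trans ?_⟩
  rw [show α - m - k + ∑ i, q i + m + 1 = α + ∑ i, q i - k + 1 by ring]
  ring

/-- Dirichlet-type integral over the open simplex: for `α > m+k-1` and positive real
exponents `q_i`, the function `x ↦ (1-∑xᵢ)^{α-m-k} ∏ xᵢ^{qᵢ}` is integrable on the open
simplex and its integral equals `∏Γ(qᵢ+1)·Γ(α-m-k+1)/Γ(α+|q|-k+1)`. -/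
theorem stmt8 (m : ℕ) (hm : 0 < m) (k : ℕ) (α : ℝ) (hα : (m : ℝ) + k - 1 < α)
    (q : Fin m → ℝ) (hq : ∀ i, 0 < q i) :
    IntegrableOn
      (fun x : Fin m → ℝ => (1 - ∑ i, x i) ^ (α - m - k) * ∏ i, (x i) ^ (q i))
      {x : Fin m → ℝ | (∀ i, 0 < x i) ∧ ∑ i, x i < 1} volume ∧
    ∫ x in {x : Fin m → ℝ | (∀ i, 0 < x i) ∧ ∑ i, x i < 1},
        (1 - ∑ i, x i) ^ (α - m - k) * ∏ i, (x i) ^ (q i)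
      = (∏ i, Real.Gamma (q i + 1)) * Real.Gamma (α - m - k + 1) /
          Real.Gamma (α + (∑ i, q i) - k + 1) :=
  stmt8_general m k α hα q hq
end

section
/- Let m be a positive integer, let s > 0 be real, and let x = (x_1,…,x_m) ∈ ℝ^m with ‖x‖ < 1. Then the family ( Γ(|q|+s)/(Γ(s)·∏_{i=1}^m Γ(q_i+1)) · x^{2q} )_{q∈ℕ^m} is summable and ∑_{q∈ℕ^m} Γ(|q|+s)/(Γ(s)·∏_{i=1}^m Γ(q_i+1)) · x^{2q} = (1-‖x‖²)^{-s}. -/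
/-!
Grouping the multi-indices `q` by `n = |q|`, the multinomial theorem collapses the `n`-th group to
`Γ(n+s)/(Γ(s) n!) ‖x‖^{2n}`, since `∑_{|q|=n} ∏ yᵢ^{qᵢ}/qᵢ! = (∑ yᵢ)ⁿ/n!` with `yᵢ = xᵢ²`. As
`Γ(n+s)/Γ(s)` is the rising factorial `s(s+1)⋯(s+n-1)`, the grouped series is the binomial series
of `(1-t)^{-s}` at `t = ‖x‖²`. All terms are nonnegative, so summability of the grouped series
gives summability of the original family, with the same sum.
-/

open Finset Polynomial

theorem Ring.choose_add_sub_one_eq_ascPochhammer_div_factorial {K : Type*} [Field K] [CharZero K]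
    (r : K) (n : ℕ) : Ring.choose (r + n - 1) n = (ascPochhammer K n).eval r / n.factorial := by
  rw [← Ring.multichoose_eq, ← ascPochhammer_smeval_eq_eval,
    ← Ring.factorial_nsmul_multichoose_eq_ascPochhammer, nsmul_eq_mul,
    mul_div_cancel_left₀ _ (Nat.cast_ne_zero.2 n.factorial_ne_zero)]

theorem Real.hasSum_ascPochhammer_eval_div_factorial_mul_pow (s : ℝ) {t : ℝ} (ht : |t| < 1) :
    HasSum (fun n ↦ (ascPochhammer ℝ n).eval s / n.factorial * t ^ n) ((1 - t) ^ (-s)) := by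
  have h := (one_div_one_sub_rpow_hasFPowerSeriesOnBall_zero s).hasSum
    (y := t) (by simpa [enorm_eq_nnnorm, ← NNReal.coe_lt_coe] using ht)
  rw [zero_add, one_div, ← rpow_neg (by linarith [le_abs_self t])] at h
  simpa [FormalMultilinearSeries.ofScalars_apply_eq,
    Ring.choose_add_sub_one_eq_ascPochhammer_div_factorial, mul_comm] using h

theorem Real.Gamma_add_nat_div_Gamma_eq {s : ℝ} (hs : ∀ k : ℕ, s ≠ -k) (n : ℕ) :
    Gamma (s + n) / Gamma s = (ascPochhammer ℝ n).eval s := by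
  induction n with
  | zero => simp [div_self (Gamma_ne_zero hs)]
  | succ n ih =>
    have hne : s + n ≠ 0 := fun h ↦ hs n (by linarith)
    rw [ascPochhammer_succ_right, eval_mul, ← ih, Nat.cast_succ, ← add_assoc, Gamma_add_one hne]
    simp only [eval_add, eval_X, eval_natCast]
    ring

theorem Finset.sum_piAntidiag_prod_pow_div_factorial {ι K : Type*} [DecidableEq ι] [Field K]
    [CharZero K] (s : Finset ι) (y : ι → K) (n : ℕ) :
    ∑ q ∈ s.piAntidiag n, ∏ i ∈ s, y i ^ q i / (q i).factorial =
      (∑ i ∈ s, y i) ^ n / n.factorial := by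
  rw [sum_pow_eq_sum_piAntidiag, sum_div]
  refine sum_congr rfl fun q hq ↦ ?_
  have hspec := Nat.multinomial_spec s q
  rw [(mem_piAntidiag.1 hq).1] at hspec
  rw [prod_div_distrib, ← hspec, Nat.cast_mul, Nat.cast_prod, mul_comm (∏ i ∈ s, _ : K),
    mul_div_mul_left _ _ (by simp [Nat.multinomial_pos, Nat.pos_iff_ne_zero.mp])]

theorem hasSum_of_hasSum_sum_piAntidiag {ι : Type*} [Fintype ι] [DecidableEq ι]
    {f : (ι → ℕ) → ℝ} (hf : 0 ≤ f) {a : ℝ}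
    (h : HasSum (fun n ↦ ∑ q ∈ univ.piAntidiag n, f q) a) : HasSum f a := by
  have hfiber_eq : ∀ n,
      (fun q : ι → ℕ ↦ ∑ i, q i) ⁻¹' {n} = ↑(univ.piAntidiag n : Finset (ι → ℕ)) := by
    intro n
    ext q
    simp
  have hfiber : ∀ n, ∑' q : (fun q : ι → ℕ ↦ ∑ i, q i) ⁻¹' {n}, f q =
      ∑ q ∈ univ.piAntidiag n, f q := by
    intro n
    rw [hfiber_eq, Finset.tsum_subtype']
  have hsum : Summable f := by
    refine (summable_partition hf (s := fun n ↦ (fun q : ι → ℕ ↦ ∑ i, q i) ⁻¹' {n})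
      (fun q ↦ by simp)).2 ⟨fun n ↦ ?_, ?_⟩
    · rw [hfiber_eq]
      exact .of_finite
    · simpa only [hfiber] using h.summable
  have hfiberwise := hsum.hasSum.tsum_fiberwise (fun q ↦ ∑ i, q i)
  simp only [hfiber] at hfiberwise
  rw [h.unique hfiberwise]
  exact hsum.hasSum

theorem hasSum_mul_prod_pow_div_factorial {ι : Type*} [Fintype ι] [DecidableEq ι]
    {c : ℕ → ℝ} (hc : 0 ≤ c) {y : ι → ℝ} (hy : 0 ≤ y) {a : ℝ}
    (h : HasSum (fun n ↦ c n / n.factorial * (∑ i, y i) ^ n) a) :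
    HasSum (fun q : ι → ℕ ↦ c (∑ i, q i) * ∏ i, y i ^ q i / (q i).factorial) a := by
  refine hasSum_of_hasSum_sum_piAntidiag (fun q ↦ ?_) ?_
  · exact mul_nonneg (hc _)
      (prod_nonneg fun i _ ↦ div_nonneg (pow_nonneg (hy i) _) (Nat.cast_nonneg _))
  · convert h using 2 with n
    rw [sum_congr rfl fun q hq ↦ by rw [(mem_piAntidiag.1 hq).1], ← mul_sum,
      sum_piAntidiag_prod_pow_div_factorial]
    ring

theorem stmt10_general (m : ℕ) (s : ℝ) (hs : 0 < s)
    (x : EuclideanSpace ℝ (Fin m)) (hx : ‖x‖ < 1) :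
    Summable (fun q : Fin m → ℕ =>
      Real.Gamma ((∑ i, q i : ℕ) + s) / (Real.Gamma s * ∏ i, Real.Gamma ((q i : ℝ) + 1)) *
        ∏ i, x i ^ (2 * q i)) ∧
    (∑' q : Fin m → ℕ,
      Real.Gamma ((∑ i, q i : ℕ) + s) / (Real.Gamma s * ∏ i, Real.Gamma ((q i : ℝ) + 1)) *
        ∏ i, x i ^ (2 * q i))
      = (1 - ‖x‖ ^ 2) ^ (-s) := by
  set c : ℕ → ℝ := fun n ↦ Real.Gamma (n + s) / Real.Gamma s
  have hterm : ∀ q : Fin m → ℕ,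
      Real.Gamma ((∑ i, q i : ℕ) + s) / (Real.Gamma s * ∏ i, Real.Gamma ((q i : ℝ) + 1)) *
        ∏ i, x i ^ (2 * q i) = c (∑ i, q i) * ∏ i, (x i ^ 2) ^ q i / (q i).factorial := by
    intro q
    simp only [c, Real.Gamma_nat_eq_factorial, pow_mul, prod_div_distrib]
    ring
  have hnorm : ‖x‖ ^ 2 = ∑ i, x i ^ 2 := by
    simp only [EuclideanSpace.norm_sq_eq, Real.norm_eq_abs, sq_abs]
  have hbinom : HasSum (fun n ↦ c n / n.factorial * (‖x‖ ^ 2) ^ n) ((1 - ‖x‖ ^ 2) ^ (-s)) := by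
    have hs' : ∀ k : ℕ, s ≠ -k := fun k h ↦ by linarith [(Nat.cast_nonneg k : (0 : ℝ) ≤ k)]
    simp only [c, add_comm _ s, Real.Gamma_add_nat_div_Gamma_eq hs']
    exact Real.hasSum_ascPochhammer_eval_div_factorial_mul_pow s
      (by rw [abs_of_nonneg (by positivity)]; nlinarith [norm_nonneg x])
  have hc : 0 ≤ c := fun n ↦
    div_nonneg (Real.Gamma_nonneg_of_nonneg (by positivity)) (Real.Gamma_pos_of_pos hs).le
  rw [hnorm] at hbinom ⊢
  have h := hasSum_mul_prod_pow_div_factorial hc (fun i ↦ sq_nonneg (x i)) hbinom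
  simp only [hterm]
  exact ⟨h.summable, h.tsum_eq⟩

/-- D'Angelo's identity: for `s > 0` and `‖x‖ < 1`,
`∑_{q∈ℕᵐ} Γ(|q|+s)/(Γ(s)∏Γ(qᵢ+1)) x^{2q} = (1-‖x‖²)^{-s}`, the family being summable. -/
theorem stmt10 (m : ℕ) (hm : 0 < m) (s : ℝ) (hs : 0 < s)
    (x : EuclideanSpace ℝ (Fin m)) (hx : ‖x‖ < 1) :
    Summable (fun q : Fin m → ℕ =>
      Real.Gamma ((∑ i, q i : ℕ) + s) / (Real.Gamma s * ∏ i, Real.Gamma ((q i : ℝ) + 1)) *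
        ∏ i, x i ^ (2 * q i)) ∧
    (∑' q : Fin m → ℕ,
      Real.Gamma ((∑ i, q i : ℕ) + s) / (Real.Gamma s * ∏ i, Real.Gamma ((q i : ℝ) + 1)) *
        ∏ i, x i ^ (2 * q i))
      = (1 - ‖x‖ ^ 2) ^ (-s) :=
  stmt10_general m s hs x hx
end

section
/- Let n, m be positive integers and ν ∈ ℝ. The identity ((ν+1)x + y)^n = ∑_{d=0}^n C(n,d) · ν^{n-d} · (x-m-n)_{n-d} · (x-d+y)_d holds for all real x and y if and only if n = 1 and ν = -1/(m+1). -/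
/-!
At `x = m + n` the base `x - m - n` of every Pochhammer factor with `d < n` vanishes, so the
identity collapses to `((ν+1)(m+n) + y)ⁿ = (m + y)_n` for all `y`. The right side vanishes at
`y = -m` and, once `n ≥ 2`, also at `y = -m - 1`, while the left side has the single root
`y = -(ν+1)(m+n)`; hence `n = 1` and `(ν+1)(m+1) = m`. Conversely, for `n = 1` the identity is
linear in `x` and `y` and reduces to `ν (m+1) = -1`.
-/

open Finset

lemma poch_neg_natCast_eq_zero {j k : ℕ} (h : j < k) : poch (-(j : ℝ)) k = 0 :=
  prod_eq_zero (mem_range.2 h) (neg_add_cancel _)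

lemma sum_choose_poch_at_shift (n m : ℕ) (ν y : ℝ) :
    ∑ d ∈ range (n + 1),
        (n.choose d : ℝ) * ν ^ (n - d) * poch ((m + n : ℝ) - m - n) (n - d) *
          poch ((m + n : ℝ) - d + y) d =
      poch (m + y) n := by
  have h_lower : ∀ d ∈ range n,
      (n.choose d : ℝ) * ν ^ (n - d) * poch ((m + n : ℝ) - m - n) (n - d) *
        poch ((m + n : ℝ) - d + y) d = 0 := by
    intro d hd
    have hbase : (m + n : ℝ) - m - n = -((0 : ℕ) : ℝ) := by push_cast; ring
    rw [hbase, poch_neg_natCast_eq_zero (Nat.sub_pos_of_lt (mem_range.1 hd))]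
    ring
  rw [sum_range_succ, sum_eq_zero h_lower, zero_add]
  simp [poch]

theorem stmt12_general (n m : ℕ) (hn : 0 < n) (ν : ℝ) :
    (∀ x y : ℝ,
      ((ν + 1) * x + y) ^ n =
        ∑ d ∈ Finset.range (n + 1),
          (n.choose d : ℝ) * ν ^ (n - d) * poch (x - m - n) (n - d) * poch (x - d + y) d)
    ↔ (n = 1 ∧ ν = -1 / ((m : ℝ) + 1)) := by
  have hm1 : (m : ℝ) + 1 ≠ 0 := by positivity
  constructor
  · intro h
    have hroot : ∀ j : ℕ, j < n → (ν + 1) * (m + n) = m + j := by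
      intro j hj
      have hpow := (h (m + n) (-(m + j))).trans (sum_choose_poch_at_shift n m ν _)
      rw [show (m : ℝ) + -(m + j) = -(j : ℝ) by ring, poch_neg_natCast_eq_zero hj,
        pow_eq_zero_iff hn.ne'] at hpow
      linarith
    have hn1 : n = 1 := by
      by_contra hne
      have h0 := hroot 0 hn
      have h1 := hroot 1 (by omega)
      push_cast at h0 h1
      linarith
    subst hn1
    have h0 := hroot 0 one_pos
    push_cast at h0
    refine ⟨rfl, ?_⟩
    field_simp
    linear_combination h0
  · rintro ⟨rfl, rfl⟩ x y
    simp only [poch, sum_range_succ, range_one, sum_singleton, prod_singleton, range_zero,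
      prod_empty, Nat.choose_self, Nat.choose_succ_self_right, tsub_zero, tsub_self, pow_one,
      pow_zero, Nat.cast_one, CharP.cast_eq_zero, zero_add, add_zero, one_mul, mul_one]
    field_simp
    ring

/-- The identity `((ν+1)x+y)ⁿ = ∑_{d=0}^{n} C(n,d) ν^{n-d} (x-m-n)_{n-d} (x-d+y)_d`
holds for all real `x`, `y` iff `n = 1` and `ν = -1/(m+1)`. -/
theorem stmt12 (n m : ℕ) (hn : 0 < n) (hm : 0 < m) (ν : ℝ) :
    (∀ x y : ℝ,
      ((ν + 1) * x + y) ^ n =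
        ∑ d ∈ Finset.range (n + 1),
          (n.choose d : ℝ) * ν ^ (n - d) * poch (x - m - n) (n - d) * poch (x - d + y) d)
    ↔ (n = 1 ∧ ν = -1 / ((m : ℝ) + 1)) :=
  stmt12_general n m hn ν
end

section
/- Let n, m be positive integers and c ∈ ℝ. If (x+c)^n = ∏_{j=1}^n (x-m-j) for all real x, then n = 1 and c = -(m+1). -/
/-!
Evaluating both sides at a root `x = m + k + 1` of the right-hand side (`k < n`) shows that
`m + k + 1 + c = 0`. For `n ≥ 2` the roots `m + 1` and `m + 2` would both give this, which is
impossible, so `n = 1` and `c = -(m + 1)`.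
-/

open Finset

variable {R : Type*} [CommRing R]

theorem prod_range_sub_sub_eq_zero (a : R) {n k : ℕ} (hk : k < n) :
    ∏ j ∈ range n, (a + (k + 1) - a - (j + 1)) = 0 :=
  prod_eq_zero (mem_range.mpr hk) (by ring)

theorem add_eq_zero_of_pow_eq_prod_range [IsDomain R] (a c : R) {n k : ℕ}
    (h : ∀ x : R, (x + c) ^ n = ∏ j ∈ range n, (x - a - (j + 1))) (hk : k < n) :
    a + (k + 1) + c = 0 := by
  have hx := h (a + (k + 1))
  rw [prod_range_sub_sub_eq_zero a hk] at hx
  exact (pow_eq_zero_iff (by omega)).mp hx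

theorem stmt14_general (n m : ℕ) (hn : 0 < n) (c : ℝ)
    (h : ∀ x : ℝ, (x + c) ^ n = ∏ j ∈ Finset.range n, (x - m - (j + 1))) :
    n = 1 ∧ c = -((m : ℝ) + 1) := by
  have h0 := add_eq_zero_of_pow_eq_prod_range (m : ℝ) c h hn
  push_cast at h0
  refine ⟨?_, by linarith⟩
  by_contra hn1
  have h1 := add_eq_zero_of_pow_eq_prod_range (m : ℝ) c h (k := 1) (by omega)
  push_cast at h1
  linarith

/-- If `(x+c)ⁿ = ∏_{j=1}^{n} (x-m-j)` for all real `x`, then `n = 1` and `c = -(m+1)`. -/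
theorem stmt14 (n m : ℕ) (hn : 0 < n) (hm : 0 < m) (c : ℝ)
    (h : ∀ x : ℝ, (x + c) ^ n = ∏ j ∈ Finset.range n, (x - m - (j + 1))) :
    n = 1 ∧ c = -((m : ℝ) + 1) :=
  stmt14_general n m hn c h
end

section
/- Let m be a positive integer, let α > 0 be real, and let c : ℕ → ℝ be a bounded sequence. Then the function on the open unit ball of ℂ^m given by w ↦ (1-‖w‖²)^α · ∑_{q∈ℕ^m} c(|q|) · Γ(|q|+α)/(Γ(α)·∏_{i=1}^m Γ(q_i+1)) · |w|^{2q} is constant if and only if the sequence c is constant. -/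
open Finset Filter Topology

/-!
The coefficients `Γ(|q| + α) / (Γ(α) ∏ Γ(qᵢ + 1))` are those of the negative multinomial expansion
`(1 - ∑ xᵢ) ^ (-α) = ∑_q … ∏ xᵢ ^ qᵢ`, which follows from the one-variable binomial series by
induction on `m`, splitting off the first variable. With `xᵢ = |wᵢ|²`, a constant `c ≡ C` therefore
gives the constant function `C`. Conversely, on the axis `w = √u e₀` constancy says that
`∑ₖ (c k - C) Γ(k + α) / (Γ(α) k!) uᵏ = 0` for `u ∈ (0, 1)`; this power series has positive radius
because `c` is bounded, so by the identity theorem all its coefficients vanish.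
-/

namespace Real

theorem Gamma_nat_add_div_Gamma_eq {a : ℝ} (ha : 0 < a) (n : ℕ) :
    Gamma (n + a) / Gamma a = (ascPochhammer ℝ n).eval a := by
  induction n with
  | zero => simp [(Gamma_pos_of_pos ha).ne']
  | succ n ih =>
    have hna : 0 < (n : ℝ) + a := by positivity
    rw [ascPochhammer_succ_eval, ← ih, Nat.cast_succ, add_right_comm, Gamma_add_one hna.ne']
    ring

theorem choose_add_sub_one_eq_Gamma_div {a : ℝ} (ha : 0 < a) (n : ℕ) :
    Ring.choose (a + n - 1) n = Gamma (n + a) / (Gamma a * Gamma (n + 1)) := by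
  rw [Ring.choose_eq_smul, Polynomial.descPochhammer_smeval_eq_ascPochhammer,
    Polynomial.ascPochhammer_smeval_eq_eval, show a + n - 1 - n + 1 = a by ring,
    ← Gamma_nat_add_div_Gamma_eq ha, Gamma_nat_eq_factorial, smul_eq_mul]
  field_simp

theorem hasSum_Gamma_div_mul_pow {a : ℝ} (ha : 0 < a) {x : ℝ} (hx : |x| < 1) :
    HasSum (fun n : ℕ => Gamma (n + a) / (Gamma a * Gamma (n + 1)) * x ^ n)
      ((1 - x) ^ (-a)) := by
  have hx' : x ∈ Metric.eball (0 : ℝ) 1 := by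
    simpa [enorm_eq_nnnorm, ← NNReal.coe_lt_one] using hx
  have := (one_div_one_sub_rpow_hasFPowerSeriesOnBall_zero a).hasSum hx'
  simp only [FormalMultilinearSeries.ofScalars_apply_eq, smul_eq_mul, zero_add,
    choose_add_sub_one_eq_Gamma_div ha] at this
  rwa [rpow_neg (by linarith [(abs_lt.1 hx).2]), ← one_div]

end Real

theorem hasSum_prod_of_nonneg {β γ : Type*} {f : β × γ → ℝ} (hf : 0 ≤ f) {g : β → ℝ} {a : ℝ}
    (hfg : ∀ b, HasSum (fun c => f (b, c)) (g b)) (hg : HasSum g a) : HasSum f a := by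
  have hsum : Summable f :=
    (summable_prod_of_nonneg hf).2
      ⟨fun b => (hfg b).summable, hg.summable.congr fun b => (hfg b).tsum_eq.symm⟩
  convert hsum.hasSum
  rw [hsum.tsum_prod' fun b => (hfg b).summable, ← hg.tsum_eq]
  exact tsum_congr fun b => (hfg b).tsum_eq.symm

noncomputable def negMultinomialCoeff {m : ℕ} (a : ℝ) (q : Fin m → ℕ) : ℝ :=
  Real.Gamma ((∑ i, q i : ℕ) + a) / (Real.Gamma a * ∏ i, Real.Gamma ((q i : ℝ) + 1))

theorem negMultinomialCoeff_nonneg {m : ℕ} {a : ℝ} (ha : 0 < a) (q : Fin m → ℕ) :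
    0 ≤ negMultinomialCoeff a q := by
  unfold negMultinomialCoeff
  positivity

theorem negMultinomialCoeff_fin_zero {a : ℝ} (ha : 0 < a) (q : Fin 0 → ℕ) :
    negMultinomialCoeff a q = 1 := by
  simp [negMultinomialCoeff, (Real.Gamma_pos_of_pos ha).ne']

theorem negMultinomialCoeff_cons {m : ℕ} {a : ℝ} (ha : 0 < a) (k : ℕ) (q : Fin m → ℕ) :
    negMultinomialCoeff a (Fin.cons k q : Fin (m + 1) → ℕ) =
      Real.Gamma (k + a) / (Real.Gamma a * Real.Gamma (k + 1)) * negMultinomialCoeff (k + a) q := by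
  have : 0 < Real.Gamma (k + a) := Real.Gamma_pos_of_pos (by positivity)
  simp only [negMultinomialCoeff, Fin.sum_cons, Fin.prod_univ_succ, Fin.cons_zero, Fin.cons_succ,
    Nat.cast_add, add_assoc, add_left_comm (k : ℝ)]
  field_simp

theorem hasSum_negMultinomialCoeff_mul_prod_pow {m : ℕ} {a : ℝ} (ha : 0 < a) {x : Fin m → ℝ}
    (hx : ∀ i, 0 ≤ x i) (hx1 : ∑ i, x i < 1) :
    HasSum (fun q : Fin m → ℕ => negMultinomialCoeff a q * ∏ i, x i ^ q i)
      ((1 - ∑ i, x i) ^ (-a)) := by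
  induction m generalizing a with
  | zero => simp [negMultinomialCoeff_fin_zero ha]
  | succ m ih =>
    set s := ∑ i : Fin m, x i.succ
    have hs1 : x 0 + s < 1 := by rwa [Fin.sum_univ_succ] at hx1
    have h1s : 0 < 1 - s := by linarith [hx 0]
    have hfiber : ∀ k : ℕ, HasSum (fun q : Fin m → ℕ =>
        negMultinomialCoeff a (Fin.cons k q : Fin (m + 1) → ℕ) *
          ∏ i, x i ^ (Fin.cons k q : Fin (m + 1) → ℕ) i)
        (Real.Gamma (k + a) / (Real.Gamma a * Real.Gamma (k + 1)) * x 0 ^ k *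
          (1 - s) ^ (-(k + a))) := by
      intro k
      refine ((ih (by positivity) (fun i => hx i.succ) (by linarith [hx 0])).mul_left
        (Real.Gamma (k + a) / (Real.Gamma a * Real.Gamma (k + 1)) * x 0 ^ k)).congr_fun
        fun q => ?_
      simp only [negMultinomialCoeff_cons ha, Fin.prod_univ_succ, Fin.cons_zero, Fin.cons_succ]
      ring
    have houter : HasSum (fun k : ℕ => Real.Gamma (k + a) / (Real.Gamma a * Real.Gamma (k + 1)) *
        x 0 ^ k * (1 - s) ^ (-(k + a))) ((1 - ∑ i, x i) ^ (-a)) := by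
      have hX : |x 0 / (1 - s)| < 1 := by
        rw [abs_of_nonneg (div_nonneg (hx 0) h1s.le), div_lt_one h1s]
        linarith
      have hsplit : (1 - s) ^ (-a) * (1 - x 0 / (1 - s)) ^ (-a) = (1 - ∑ i, x i) ^ (-a) := by
        rw [← Real.mul_rpow h1s.le (by linarith [abs_lt.1 hX]), Fin.sum_univ_succ]
        congr 1
        field_simp
        ring
      rw [← hsplit]
      refine ((Real.hasSum_Gamma_div_mul_pow ha hX).mul_left ((1 - s) ^ (-a))).congr_fun fun k => ?_
      rw [neg_add, Real.rpow_add h1s, Real.rpow_neg h1s.le (k : ℝ), Real.rpow_natCast, div_pow]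
      ring
    rw [← (Fin.consEquiv fun _ => ℕ).hasSum_iff]
    refine hasSum_prod_of_nonneg (fun p => ?_) hfiber houter
    exact mul_nonneg (negMultinomialCoeff_nonneg ha _) (prod_nonneg fun i _ => pow_nonneg (hx i) _)

theorem negMultinomialCoeff_single {m : ℕ} (a : ℝ) (i : Fin m) (k : ℕ) :
    negMultinomialCoeff a (Pi.single i k) =
      Real.Gamma (k + a) / (Real.Gamma a * Real.Gamma (k + 1)) := by
  rw [negMultinomialCoeff, sum_pi_single', if_pos (mem_univ i),
    Fintype.prod_eq_single i fun j hj => by simp [hj]]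
  simp

theorem tsum_mul_prod_pow_single {m : ℕ} (f : (Fin m → ℕ) → ℝ) (i : Fin m) (u : ℝ) :
    ∑' q : Fin m → ℕ, f q * ∏ j, Pi.single i u j ^ q j = ∑' k : ℕ, f (Pi.single i k) * u ^ k := by
  rw [← (Pi.single_injective i).tsum_eq]
  · refine tsum_congr fun k => ?_
    rw [Fintype.prod_eq_single i fun j hj => by simp [hj]]
    simp
  · intro q hq
    by_contra hq_range
    obtain ⟨j, hj, hqj⟩ : ∃ j, j ≠ i ∧ q j ≠ 0 := by
      by_contra! h
      exact hq_range ⟨q i, funext fun j => by by_cases hj : j = i <;> simp [hj, h]⟩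
    have hfactor : (Pi.single i u : Fin m → ℝ) j ^ q j = 0 := by simp [hj, hqj]
    exact hq (mul_eq_zero_of_right _ (prod_eq_zero (mem_univ j) hfactor))

theorem eq_zero_of_tsum_mul_pow_eq_zero {b : ℕ → ℝ}
    (hb : 0 < (FormalMultilinearSeries.ofScalars ℝ b).radius)
    (h : ∀ᶠ u in 𝓝[>] 0, ∑' k, b k * u ^ k = 0) : b = 0 := by
  let p := FormalMultilinearSeries.ofScalars ℝ b
  have hp : HasFPowerSeriesAt p.sum p 0 := (p.hasFPowerSeriesOnBall hb).hasFPowerSeriesAt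
  have hfreq : ∃ᶠ u in 𝓝[≠] 0, p.sum u = 0 := by
    refine (h.mono fun u hu => (FormalMultilinearSeries.ofScalars_sum_eq b u).trans hu).frequently
      |>.filter_mono (nhdsWithin_mono _ fun u hu => ne_of_gt hu)
  have hp0 : p = 0 :=
    hp.locally_zero_iff.1 (hp.analyticAt.frequently_zero_iff_eventually_zero.1 hfreq)
  ext k
  exact (FormalMultilinearSeries.ofScalars_eq_zero (E := ℝ) (c := b) k).1 (congrFun hp0 k)

theorem eq_of_one_sub_rpow_mul_tsum_eq {a : ℝ} (ha : 0 < a) {c : ℕ → ℝ} (hc : ∃ M, ∀ k, |c k| ≤ M)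
    {C : ℝ} (h : ∀ u, 0 < u → u < 1 →
      (1 - u) ^ a * ∑' k, c k * (Real.Gamma (k + a) / (Real.Gamma a * Real.Gamma (k + 1))) * u ^ k
        = C)
    (k : ℕ) : c k = C := by
  obtain ⟨M, hM⟩ := hc
  set γ : ℕ → ℝ := fun k => Real.Gamma (k + a) / (Real.Gamma a * Real.Gamma (k + 1))
  set b : ℕ → ℝ := fun k => (c k - C) * γ k
  have hγ : ∀ k, 0 < γ k := fun k => by positivity
  have hsum : ∀ u, 0 ≤ u → u < 1 → Summable fun k => |b k| * u ^ k := by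
    intro u hu0 hu1
    refine ((Real.hasSum_Gamma_div_mul_pow ha (abs_lt.2 ⟨by linarith, hu1⟩)).summable.mul_left
      (M + |C|)).of_nonneg_of_le (fun k => by positivity) fun k => ?_
    rw [← mul_assoc]
    gcongr
    rw [abs_mul, abs_of_pos (hγ k)]
    gcongr
    exact (abs_sub _ _).trans (by linarith [hM k])
  have hradius : 0 < (FormalMultilinearSeries.ofScalars ℝ b).radius := by
    refine lt_of_lt_of_le (by norm_num)
      ((FormalMultilinearSeries.ofScalars ℝ b).le_radius_of_summable_norm (r := 1 / 2) ?_)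
    simpa [FormalMultilinearSeries.ofScalars_norm] using hsum (1 / 2) (by norm_num) (by norm_num)
  have hzero : ∀ᶠ u in 𝓝[>] 0, ∑' k, b k * u ^ k = 0 := by
    filter_upwards [Ioo_mem_nhdsGT one_pos] with u ⟨hu0, hu1⟩
    have h1u : 0 < 1 - u := by linarith
    have hΓ := Real.hasSum_Gamma_div_mul_pow ha (abs_lt.2 ⟨by linarith, hu1⟩)
    have hB : Summable fun k => b k * u ^ k := (hsum u hu0.le hu1).of_norm_bounded fun k => by
      rw [Real.norm_eq_abs, abs_mul, abs_pow, abs_of_pos hu0]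
    have hsplit : ∑' k, c k * γ k * u ^ k = ∑' k, b k * u ^ k + C * (1 - u) ^ (-a) := by
      rw [← (hB.hasSum.add (hΓ.mul_left C)).tsum_eq]
      exact tsum_congr fun k => by ring
    have hpos : 0 < (1 - u) ^ a := by positivity
    have := h u hu0 hu1
    change (1 - u) ^ a * ∑' k, c k * γ k * u ^ k = C at this
    rw [hsplit, mul_add, mul_left_comm, Real.rpow_neg h1u.le, mul_inv_cancel₀ hpos.ne', mul_one,
      add_eq_right] at this
    exact (mul_eq_zero.1 this).resolve_left hpos.ne'
  have := congrFun (eq_zero_of_tsum_mul_pow_eq_zero hradius hzero) k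
  simpa [b, sub_eq_zero, (hγ k).ne'] using this

/-- For `α > 0` and a bounded sequence `c : ℕ → ℝ`, the function
`w ↦ (1-‖w‖²)^α ∑_{q∈ℕᵐ} c(|q|) Γ(|q|+α)/(Γ(α)∏Γ(qᵢ+1)) |w|^{2q}` on the open unit
ball of `ℂᵐ` is constant iff the sequence `c` is constant. -/
theorem stmt15 (m : ℕ) (hm : 0 < m) (α : ℝ) (hα : 0 < α)
    (c : ℕ → ℝ) (hc : ∃ M : ℝ, ∀ k, |c k| ≤ M) :
    (∃ C : ℝ, ∀ w : EuclideanSpace ℂ (Fin m), ‖w‖ < 1 →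
      (1 - ‖w‖ ^ 2) ^ α *
        ∑' q : Fin m → ℕ,
          c (∑ i, q i) * Real.Gamma ((∑ i, q i : ℕ) + α) /
            (Real.Gamma α * ∏ i, Real.Gamma ((q i : ℝ) + 1)) *
            ∏ i, ‖w i‖ ^ (2 * q i)
      = C)
    ↔ (∃ C : ℝ, ∀ k : ℕ, c k = C) := by
  have hseries : ∀ w : EuclideanSpace ℂ (Fin m),
      ∑' q : Fin m → ℕ, c (∑ i, q i) * Real.Gamma ((∑ i, q i : ℕ) + α) /
          (Real.Gamma α * ∏ i, Real.Gamma ((q i : ℝ) + 1)) * ∏ i, ‖w i‖ ^ (2 * q i) =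
        ∑' q : Fin m → ℕ, c (∑ i, q i) * negMultinomialCoeff α q * ∏ i, (‖w i‖ ^ 2) ^ q i :=
    fun w => tsum_congr fun q => by simp only [negMultinomialCoeff, mul_div_assoc, pow_mul]
  simp only [hseries]
  constructor
  · rintro ⟨C, hC⟩
    refine ⟨C, eq_of_one_sub_rpow_mul_tsum_eq hα hc fun u hu0 hu1 => ?_⟩
    set w : EuclideanSpace ℂ (Fin m) := EuclideanSpace.single ⟨0, hm⟩ (√u : ℂ)
    have hw : ‖w‖ ^ 2 = u := by simp [w, Real.sq_sqrt hu0.le]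
    have hwi : ∀ i, ‖w i‖ ^ 2 = (Pi.single ⟨0, hm⟩ u : Fin m → ℝ) i := fun i => by
      by_cases hi : i = ⟨0, hm⟩ <;> simp [w, hi, Real.sq_sqrt hu0.le]
    have := hC w (by nlinarith [norm_nonneg w])
    simpa only [hw, hwi, tsum_mul_prod_pow_single, sum_pi_single', mem_univ, if_true,
      negMultinomialCoeff_single] using this
  · rintro ⟨C, hC⟩
    refine ⟨C, fun w hw => ?_⟩
    have hw1 : 0 < 1 - ∑ i, ‖w i‖ ^ 2 := by
      rw [← EuclideanSpace.norm_sq_eq]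
      nlinarith [norm_nonneg w]
    simp only [hC, mul_assoc, tsum_mul_left]
    rw [(hasSum_negMultinomialCoeff_mul_prod_pow hα (fun i => sq_nonneg _) (by linarith)).tsum_eq,
      EuclideanSpace.norm_sq_eq, Real.rpow_neg hw1.le, mul_left_comm,
      mul_inv_cancel₀ (by positivity), mul_one]
end
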